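/- arXiv:0905.0679 — 2 statements merged into one kernel-verified Lean document; each statement's English description precedes it below -/
import Mathlib

section
/- For generic complex parameters a, b, c, d, u, v, w and base q with |q|<1, the terminating balanced basic hypergeometric series satisfies: (c−w)(1−d)·₄φ₃(a,b,c,qd; u,v,qw; q,q) + (w−d)(1−c)·₄φ₃(a,b,qc,d; u,v,qw; q,q) = (c−d)(1−w)·₄φ₃(a,b,c,d; u,v,w; q,q), where all series are interpreted as terminating sums (one of the upper parameters is q^{−n}). -/
open Finset

/-- The q-Pochhammer symbol `(a;q)_k = ∏_{i=0}^{k-1} (1 - a qⁱ)`. -/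
def qPoch (q a : ℂ) (k : ℕ) : ℂ := ∏ i ∈ range k, (1 - a * q ^ i)

/-- The terminating basic hypergeometric series `₄φ₃(a,b,c,d; u,v,w; q, q)`,
truncated at `n` (one of the upper parameters is assumed to be `q^{-n}`). -/
noncomputable def phi43 (n : ℕ) (q a b c d u v w : ℂ) : ℂ :=
  ∑ k ∈ range (n + 1),
    (qPoch q a k * qPoch q b k * qPoch q c k * qPoch q d k) /
      (qPoch q q k * qPoch q u k * qPoch q v k * qPoch q w k) * q ^ k

/-
The relation holds term by term. Trading `(1-d)(qd;q)_k`, `(1-c)(qc;q)_k` and `(1-w)/(w;q)_k` via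
`(x;q)_{k+1} = (1-x)(qx;q)_k = (x;q)_k(1-xqᵏ)`, the `k`-th summands of both sides become
`(a;q)_k(b;q)_k(c;q)_k(d;q)_k qᵏ/((q;q)_k(u;q)_k(v;q)_k(qw;q)_k)` times
`(c-w)(1-dqᵏ) + (w-d)(1-cqᵏ)` and `(c-d)(1-wqᵏ)` respectively, which are equal.
-/

lemma qPoch_succ (q x : ℂ) (k : ℕ) : qPoch q x (k + 1) = qPoch q x k * (1 - x * q ^ k) :=
  prod_range_succ _ k

lemma qPoch_succ' (q x : ℂ) (k : ℕ) : qPoch q x (k + 1) = (1 - x) * qPoch q (q * x) k := by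
  rw [qPoch, prod_range_succ', pow_zero, mul_one, mul_comm, qPoch]
  congr 1
  exact prod_congr rfl fun i _ => by ring

lemma one_sub_mul_qPoch_mul (q x : ℂ) (k : ℕ) :
    (1 - x) * qPoch q (q * x) k = qPoch q x k * (1 - x * q ^ k) := by
  rw [← qPoch_succ', qPoch_succ]

lemma qPoch_contiguous {q w : ℂ} {k : ℕ} (c d : ℂ)
    (hw : qPoch q w k ≠ 0) (hqw : qPoch q (q * w) k ≠ 0) :
    (c - w) * (1 - d) * (qPoch q c k * qPoch q (q * d) k / qPoch q (q * w) k) +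
      (w - d) * (1 - c) * (qPoch q (q * c) k * qPoch q d k / qPoch q (q * w) k) =
    (c - d) * (1 - w) * (qPoch q c k * qPoch q d k / qPoch q w k) := by
  rw [mul_div_assoc', mul_div_assoc', ← add_div, mul_div_assoc', div_eq_div_iff hqw hw]
  linear_combination (c - w) * qPoch q c k * qPoch q w k * one_sub_mul_qPoch_mul q d k +
    (w - d) * qPoch q d k * qPoch q w k * one_sub_mul_qPoch_mul q c k -
    (c - d) * qPoch q c k * qPoch q d k * one_sub_mul_qPoch_mul q w k

theorem phi43_contiguous_relation_general (n : ℕ) (q a b c d u v w : ℂ)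
    (hden : ∀ k ≤ n + 1,
      qPoch q q k ≠ 0 ∧ qPoch q u k ≠ 0 ∧ qPoch q v k ≠ 0 ∧
        qPoch q w k ≠ 0 ∧ qPoch q (q * w) k ≠ 0) :
    (c - w) * (1 - d) * phi43 n q a b c (q * d) u v (q * w) +
      (w - d) * (1 - c) * phi43 n q a b (q * c) d u v (q * w) =
    (c - d) * (1 - w) * phi43 n q a b c d u v w := by
  simp only [phi43, mul_sum, ← sum_add_distrib]
  refine sum_congr rfl fun k hk => ?_
  obtain ⟨-, -, -, hw, hqw⟩ := hden k (mem_range.mp hk).le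
  linear_combination
    qPoch q a k * qPoch q b k * q ^ k / (qPoch q q k * qPoch q u k * qPoch q v k) *
      qPoch_contiguous c d hw hqw

/-- the contiguous relation
`(c−w)(1−d)·₄φ₃(a,b,c,qd;u,v,qw) + (w−d)(1−c)·₄φ₃(a,b,qc,d;u,v,qw)
  = (c−d)(1−w)·₄φ₃(a,b,c,d;u,v,w)`
for terminating series with `a = q^{-n}`, `|q| < 1`, and no vanishing denominators. -/
theorem phi43_contiguous_relation (n : ℕ) (q a b c d u v w : ℂ)
    (hq : ‖q‖ < 1) (hq0 : q ≠ 0) (ha : a = q ^ (-(n : ℤ)))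
    (hden : ∀ k ≤ n + 1,
      qPoch q q k ≠ 0 ∧ qPoch q u k ≠ 0 ∧ qPoch q v k ≠ 0 ∧
        qPoch q w k ≠ 0 ∧ qPoch q (q * w) k ≠ 0) :
    (c - w) * (1 - d) * phi43 n q a b c (q * d) u v (q * w) +
      (w - d) * (1 - c) * phi43 n q a b (q * c) d u v (q * w) =
    (c - d) * (1 - w) * phi43 n q a b c d u v w :=
  phi43_contiguous_relation_general n q a b c d u v w hden
end

section
/- (Eynard–Mehta type formula for a two-step chain) Let X be a finite set, and for t = 0, 1 let {f^t_n}_{n=0}^{|X|−1} be an orthonormal basis of ℓ²(X) (real-valued), and let c_n > 0 be constants. Define v(x,y) = Σ_n c_n f^0_n(x) f^1_n(y). Suppose an N-point process has joint distribution Prob(X₀ = (x₁,…,x_N), X₁ = (y₁,…,y_N)) = (det[f^0_{i−1}(x_j)] · det[v(x_i,y_j)] · det[f^1_{i−1}(y_j)]) / ∏_{n=0}^{N−1} c_n, for x₁<…<x_N and y₁<…<y_N. Then the one-time marginal of X₀ is (det[f^0_{i−1}(x_j)])² and the conditional law of X₁ given X₀ is det[v(x_i,y_j)]det[f^1_{i−1}(y_j)]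 / (det[f^0_{i−1}(x_j)] ∏_n c_n); in particular these marginal and transition expressions sum to the stated joint law and the transition kernel is stochastic: Σ_{y₁<…<y_N} det[v(x_i,y_j)] det[f^1_{i−1}(y_j)] = det[f^0_{i−1}(x_j)] ∏_{n=0}^{N−1} c_n. -/
open Finset Function Equiv Matrix

/-!
By Cauchy–Binet, the sum over increasing `y` of `det[v(xᵢ, y_j)] det[f¹_{i-1}(y_j)]` is the
determinant of the `N × N` matrix `Σ_y v(xᵢ, y) f¹_{k-1}(y)`. Orthonormality of `f¹` collapses
the expansion of `v`, so this entry is `c_{k-1} f⁰_{k-1}(xᵢ)`, and the determinant factors as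
`det[f⁰_{i-1}(x_j)] ∏_{n<N} c_n`.

Cauchy–Binet is proved by expanding `det (A * B)` over all column selections `p`: the
non-injective ones give a repeated column, and each injective one is uniquely an increasing
tuple composed with a permutation, whose sign is absorbed into a determinant of `B`.
-/

theorem Matrix.det_mul_eq_sum_det_submatrix_mul_prod {n ι R : Type*} [Fintype n] [DecidableEq n]
    [Fintype ι] [CommRing R] (A : Matrix n ι R) (B : Matrix ι n R) :
    (A * B).det = ∑ p : n → ι, (A.submatrix id p).det * ∏ i, B (p i) i := by
  simp only [det_apply', mul_apply, prod_univ_sum, mul_sum, Fintype.piFinset_univ, sum_mul,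
    prod_mul_distrib, submatrix_apply, id]
  rw [sum_comm]
  refine sum_congr rfl fun p _ => sum_congr rfl fun σ _ => ?_
  ring

theorem Matrix.det_submatrix_eq_zero_of_not_injective {m n R : Type*} [Fintype m] [DecidableEq m]
    [CommRing R] (A : Matrix m n R) {p : m → n} (hp : ¬Injective p) :
    (A.submatrix id p).det = 0 := by
  obtain ⟨i, j, hij, hne⟩ : ∃ i j, p i = p j ∧ i ≠ j := by
    simpa [Injective] using hp
  exact det_zero_of_column_eq hne fun k => by simp [hij]

section StrictMonoPerm

variable {N : ℕ} {ι : Type*} [Fintype ι] [LinearOrder ι]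

noncomputable def strictMonoProdPermEquivInjective :
    {y : Fin N → ι // StrictMono y} × Perm (Fin N) ≃ {g : Fin N → ι // Injective g} :=
  Equiv.ofBijective (fun p => ⟨p.1.1 ∘ p.2, p.1.2.injective.comp p.2.injective⟩) <| by
    constructor
    · rintro ⟨⟨y, hy⟩, σ⟩ ⟨⟨y', hy'⟩, σ'⟩ h
      have hcomp : y ∘ σ = y' ∘ σ' := congrArg Subtype.val h
      obtain rfl : y = y' := hy.range_inj hy' |>.mp <| by
        rw [← σ.surjective.range_comp, hcomp, σ'.surjective.range_comp]
      obtain rfl : σ = σ' := Equiv.ext fun i => hy.injective (congrFun hcomp i)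
      rfl
    · rintro ⟨g, hg⟩
      classical
      set s := univ.image g
      have hs : s.card = N := by simp [s, card_image_of_injective _ hg]
      let σ : Perm (Fin N) := (Equiv.ofInjective g hg).trans
        ((Equiv.subtypeEquivRight fun z => by simp [s]).trans (s.orderIsoOfFin hs).symm.toEquiv)
      refine ⟨⟨⟨s.orderEmbOfFin hs, (s.orderEmbOfFin hs).strictMono⟩, σ⟩, Subtype.ext ?_⟩
      funext i
      simp [σ, ← coe_orderIsoOfFin_apply]

theorem Matrix.det_mul_eq_sum_strictMono {R : Type*} [CommRing R] (A : Matrix (Fin N) ι R)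
    (B : Matrix ι (Fin N) R) :
    (A * B).det =
      ∑ y : {y : Fin N → ι // StrictMono y}, (A.submatrix id y.1).det * (B.submatrix y.1 id).det := by
  classical
  let F : (Fin N → ι) → R := fun p => (A.submatrix id p).det * ∏ i, B (p i) i
  calc (A * B).det = ∑ p, F p := det_mul_eq_sum_det_submatrix_mul_prod A B
    _ = ∑ p : {p : Fin N → ι // Injective p}, F p := by
      rw [← sum_filter_of_ne (p := Injective) fun p _ hp => not_not.mp fun hinj =>
        hp (by simp [F, det_submatrix_eq_zero_of_not_injective A hinj])]
      exact sum_subtype _ (fun _ => mem_filter_univ _) F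
    _ = ∑ yσ : {y : Fin N → ι // StrictMono y} × Perm (Fin N), F (yσ.1.1 ∘ yσ.2) :=
      (Fintype.sum_equiv strictMonoProdPermEquivInjective _ _ fun _ => rfl).symm
    _ = _ := by
      rw [Fintype.sum_prod_type]
      refine sum_congr rfl fun y _ => ?_
      have hperm (σ : Perm (Fin N)) : (A.submatrix id (y.1 ∘ σ)).det =
          Perm.sign σ * (A.submatrix id y.1).det :=
        det_permute' σ (A.submatrix id y.1)
      simp only [F, hperm, det_apply' (B.submatrix y.1 id), mul_sum]
      refine sum_congr rfl fun σ _ => ?_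
      simp only [submatrix_apply, id, comp_def]
      ring

end StrictMonoPerm

theorem sum_expansion_mul_of_orthonormal {X ι R : Type*} [Fintype X] [Fintype ι] [DecidableEq ι]
    [CommRing R] (f g : ι → X → R) (c : ι → R)
    (hg : ∀ m n, ∑ y, g m y * g n y = if m = n then 1 else 0) (x : X) (m : ι) :
    ∑ y, (∑ n, c n * f n x * g n y) * g m y = c m * f m x := by
  calc ∑ y, (∑ n, c n * f n x * g n y) * g m y
      = ∑ n, c n * f n x * ∑ y, g n y * g m y := by
        simp only [sum_mul, mul_sum, mul_assoc]
        exact sum_comm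
    _ = c m * f m x := by simp [hg]

theorem eynard_mehta_two_step_general (L N : ℕ) (hN : N ≤ L + 1)
    (f0 f1 : Fin (L + 1) → Fin (L + 1) → ℝ) (c : Fin (L + 1) → ℝ)
    (hortho1 : ∀ m n : Fin (L + 1), ∑ x : Fin (L + 1), f1 m x * f1 n x =
      if m = n then 1 else 0)
    (v : Fin (L + 1) → Fin (L + 1) → ℝ)
    (hv : ∀ x y, v x y = ∑ n : Fin (L + 1), c n * f0 n x * f1 n y)
    (x : Fin N → Fin (L + 1)) :
    ∑ y : {y : Fin N → Fin (L + 1) // StrictMono y},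
      Matrix.det (Matrix.of fun i j : Fin N => v (x i) (y.1 j)) *
        Matrix.det (Matrix.of fun i j : Fin N => f1 (Fin.castLE hN i) (y.1 j)) =
    Matrix.det (Matrix.of fun i j : Fin N => f0 (Fin.castLE hN i) (x j)) *
      ∏ n : Fin N, c (Fin.castLE hN n) := by
  have hprod : (of fun i z => v (x i) z) * (of fun z k => f1 (Fin.castLE hN k) z) =
      (of fun k j => f0 (Fin.castLE hN k) (x j))ᵀ * diagonal fun k => c (Fin.castLE hN k) := by
    ext i k
    rw [mul_diagonal, mul_apply]
    simp only [of_apply, transpose_apply, hv, sum_expansion_mul_of_orthonormal f0 f1 c hortho1]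
    exact mul_comm _ _
  calc _ = ((of fun i z => v (x i) z) * (of fun z k => f1 (Fin.castLE hN k) z)).det := by
        rw [det_mul_eq_sum_strictMono]
        refine sum_congr rfl fun y _ => congrArg _ ?_
        rw [← det_transpose]
        rfl
    _ = _ := by rw [hprod, det_mul, det_transpose, det_diagonal]

/-- Eynard–Mehta type identity for a two-step chain. Let
`{f⁰_n}`, `{f¹_n}` be orthonormal bases of `ℓ²({0,…,L})`, `c_n > 0`, and
`v(x,y) = Σ_n c_n f⁰_n(x) f¹_n(y)`. Then summing over increasing `N`-tuples `y`,
`Σ_y det[v(xᵢ,y_j)] det[f¹_{i−1}(y_j)] = det[f⁰_{i−1}(x_j)] ∏_{n<N} c_n`,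
so that the conditional law of `X₁` given `X₀` is a stochastic kernel and the
joint law factors into the marginal `det[f⁰]²` times the transition kernel. -/
theorem eynard_mehta_two_step (L N : ℕ) (hN : N ≤ L + 1)
    (f0 f1 : Fin (L + 1) → Fin (L + 1) → ℝ) (c : Fin (L + 1) → ℝ)
    (hortho0 : ∀ m n : Fin (L + 1), ∑ x : Fin (L + 1), f0 m x * f0 n x =
      if m = n then 1 else 0)
    (hortho1 : ∀ m n : Fin (L + 1), ∑ x : Fin (L + 1), f1 m x * f1 n x =
      if m = n then 1 else 0)
    (hc : ∀ n, 0 < c n)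
    (v : Fin (L + 1) → Fin (L + 1) → ℝ)
    (hv : ∀ x y, v x y = ∑ n : Fin (L + 1), c n * f0 n x * f1 n y)
    (x : Fin N → Fin (L + 1)) (hx : StrictMono x) :
    ∑ y : {y : Fin N → Fin (L + 1) // StrictMono y},
      Matrix.det (Matrix.of fun i j : Fin N => v (x i) (y.1 j)) *
        Matrix.det (Matrix.of fun i j : Fin N => f1 (Fin.castLE hN i) (y.1 j)) =
    Matrix.det (Matrix.of fun i j : Fin N => f0 (Fin.castLE hN i) (x j)) *
      ∏ n : Fin N, c (Fin.castLE hN n) :=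
  eynard_mehta_two_step_general L N hN f0 f1 c hortho1 v hv x
end
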